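/- arXiv:1410.8420 — 4 statements merged into one kernel-verified Lean document; each statement's English description precedes it below -/
import Mathlib

section
/- Fix a function f: {0,1}^n → {0,1} and let k = a(f) be its alternation complexity. Then for every x ∈ {0,1}^n: if f(0^n) = 0 then f(x) = PAR_k(1[T_0^f](x), ..., 1[T_{k−1}^f](x)), and if f(0^n) = 1 then f(x) = 1 ⊕ PAR_k(1[T_0^f](x), ..., 1[T_{k−1}^f](x)). Equivalently, f(x) = f(0^n) ⊕ ⨁_{ℓ=0}^{k−1} 1[a_f(x) ≤ ℓ] for all x. -/
/-- Number of alternations of `f` along the chain `X` of `ℓ+1` points: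
the number of indices `j` with `f (X j) ≠ f (X (j+1))`. -/
def altCount {n : ℕ} (f : (Fin n → Bool) → Bool) {ℓ : ℕ}
    (X : Fin (ℓ + 1) → (Fin n → Bool)) : ℕ :=
  (Finset.univ.filter (fun j : Fin ℓ => f (X j.castSucc) ≠ f (X j.succ))).card

/-- `a_f(x)`: the maximum number of alternations of `f` over all
(strictly increasing) chains in `{0,1}^n` starting at `x`. -/
noncomputable def altFrom {n : ℕ} (f : (Fin n → Bool) → Bool) (x : Fin n → Bool) : ℕ :=
  sSup {k | ∃ (ℓ : ℕ) (X : Fin (ℓ + 1) → (Fin n → Bool)),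
    StrictMono X ∧ X 0 = x ∧ altCount f X = k}

/-- `a(f)`: the maximum number of alternations of `f` over all
(strictly increasing) chains in `{0,1}^n`. -/
noncomputable def alt {n : ℕ} (f : (Fin n → Bool) → Bool) : ℕ :=
  sSup {k | ∃ (ℓ : ℕ) (X : Fin (ℓ + 1) → (Fin n → Bool)),
    StrictMono X ∧ altCount f X = k}

/-
A chain can be extended to end at `⊤` (and to start at `⊥`) without losing alternations, so a
chain realising `a_f(x)` ends at a point where `f` takes the value `f ⊤`; and the number of
alternations along a chain has the parity of `[f (start) ≠ f (end)]`. Hence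
`a_f(x) ≡ [f x ≠ f ⊤]` and `a(f) = a_f(⊥) ≡ [f ⊥ ≠ f ⊤]` modulo 2. Since `a_f(x) ≤ a(f)`, the
number of `ℓ < a(f)` with `a_f(x) ≤ ℓ` is `a(f) - a_f(x) ≡ [f x ≠ f ⊥]`.
-/

lemma strictMono_snoc {α : Type*} [Preorder α] {ℓ : ℕ} {X : Fin (ℓ + 1) → α} (hX : StrictMono X)
    {y : α} (hy : X (Fin.last ℓ) < y) : StrictMono (Fin.snoc X y : Fin (ℓ + 2) → α) := by
  rw [Fin.strictMono_iff_lt_succ]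
  intro i
  cases i using Fin.lastCases with
  | last => simpa only [Fin.succ_last, Fin.snoc_last, Fin.snoc_castSucc] using hy
  | cast j =>
    simpa only [Fin.succ_castSucc, Fin.snoc_castSucc] using hX j.castSucc_lt_succ

lemma card_filter_range_le (m k : ℕ) : ((Finset.range k).filter (m ≤ ·)).card = k - m := by
  rw [Finset.range_eq_Ico, Finset.Ico_filter_le, Nat.card_Ico, max_eq_right (Nat.zero_le m)]

section

variable {n : ℕ} (f : (Fin n → Bool) → Bool)

def chainAltsFrom (x : Fin n → Bool) : Set ℕ :=
  {k | ∃ (ℓ : ℕ) (X : Fin (ℓ + 1) → (Fin n → Bool)), StrictMono X ∧ X 0 = x ∧ altCount f X = k}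

def chainAlts : Set ℕ :=
  {k | ∃ (ℓ : ℕ) (X : Fin (ℓ + 1) → (Fin n → Bool)), StrictMono X ∧ altCount f X = k}

lemma altCount_le_length {ℓ : ℕ} (X : Fin (ℓ + 1) → (Fin n → Bool)) : altCount f X ≤ ℓ :=
  (Finset.card_filter_le _ _).trans (Finset.card_fin ℓ).le

lemma altCount_lt_two_pow {ℓ : ℕ} {X : Fin (ℓ + 1) → (Fin n → Bool)} (hX : StrictMono X) :
    altCount f X < 2 ^ n := by
  have := Fintype.card_le_of_injective X hX.injective
  simp only [Fintype.card_fin, Fintype.card_fun, Fintype.card_bool] at this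
  exact (altCount_le_length f X).trans_lt (by omega)

lemma altCount_init {ℓ : ℕ} (X : Fin (ℓ + 2) → (Fin n → Bool)) :
    altCount f X = altCount f (Fin.init X)
      + if f (X (Fin.last ℓ).castSucc) ≠ f (X (Fin.last (ℓ + 1))) then 1 else 0 := by
  rw [altCount, altCount, Finset.card_filter, Finset.card_filter, Fin.sum_univ_castSucc]
  simp only [Fin.init, Fin.succ_castSucc, Fin.succ_last]
  rfl

lemma altCount_snoc {ℓ : ℕ} (X : Fin (ℓ + 1) → (Fin n → Bool)) (y : Fin n → Bool) :
    altCount f (Fin.snoc X y : Fin (ℓ + 2) → (Fin n → Bool))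
      = altCount f X + if f (X (Fin.last ℓ)) ≠ f y then 1 else 0 := by
  rw [altCount_init, Fin.init_snoc, Fin.snoc_castSucc, Fin.snoc_last]

lemma altCount_cons {ℓ : ℕ} (X : Fin (ℓ + 1) → (Fin n → Bool)) (y : Fin n → Bool) :
    altCount f (Fin.cons y X : Fin (ℓ + 2) → (Fin n → Bool))
      = (if f y ≠ f (X 0) then 1 else 0) + altCount f X := by
  simp only [altCount, Finset.card_filter, Fin.sum_univ_succ, Fin.castSucc_zero, Fin.cons_zero,
    Fin.cons_succ, ← Fin.succ_castSucc]

lemma odd_altCount_iff {ℓ : ℕ} (X : Fin (ℓ + 1) → (Fin n → Bool)) :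
    Odd (altCount f X) ↔ f (X 0) ≠ f (X (Fin.last ℓ)) := by
  induction ℓ with
  | zero => simp [altCount, Fin.last]
  | succ ℓ ih =>
    rw [altCount_init, Nat.odd_add, ih]
    simp only [Fin.init, Fin.castSucc_zero]
    cases f (X 0) <;> cases f (X (Fin.last ℓ).castSucc) <;> cases f (X (Fin.last (ℓ + 1))) <;>
      simp

lemma chainAltsFrom_subset (x : Fin n → Bool) : chainAltsFrom f x ⊆ chainAlts f :=
  fun _ ⟨ℓ, X, hX, _, hk⟩ ↦ ⟨ℓ, X, hX, hk⟩

lemma bddAbove_chainAlts : BddAbove (chainAlts f) :=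
  ⟨2 ^ n, fun _ ⟨_, _, hX, hk⟩ ↦ hk ▸ (altCount_lt_two_pow f hX).le⟩

lemma nonempty_chainAltsFrom (x : Fin n → Bool) : (chainAltsFrom f x).Nonempty :=
  ⟨_, 0, _, Subsingleton.strictMono (fun _ : Fin 1 ↦ x), rfl, rfl⟩

lemma altCount_le_altFrom {ℓ : ℕ} {X : Fin (ℓ + 1) → (Fin n → Bool)} (hX : StrictMono X) :
    altCount f X ≤ altFrom f (X 0) :=
  le_csSup ((bddAbove_chainAlts f).mono (chainAltsFrom_subset f _)) ⟨ℓ, X, hX, rfl, rfl⟩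

lemma exists_chain_altFrom (x : Fin n → Bool) : ∃ (ℓ : ℕ) (X : Fin (ℓ + 1) → (Fin n → Bool)),
    StrictMono X ∧ X 0 = x ∧ altCount f X = altFrom f x :=
  Nat.sSup_mem (nonempty_chainAltsFrom f x)
    ((bddAbove_chainAlts f).mono (chainAltsFrom_subset f x))

lemma exists_chain_alt : ∃ (ℓ : ℕ) (X : Fin (ℓ + 1) → (Fin n → Bool)),
    StrictMono X ∧ altCount f X = alt f :=
  Nat.sSup_mem ((nonempty_chainAltsFrom f ⊥).mono (chainAltsFrom_subset f ⊥))
    (bddAbove_chainAlts f)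

lemma altFrom_le_alt (x : Fin n → Bool) : altFrom f x ≤ alt f :=
  csSup_le_csSup (bddAbove_chainAlts f) (nonempty_chainAltsFrom f x) (chainAltsFrom_subset f x)

lemma odd_altFrom_iff (x : Fin n → Bool) : Odd (altFrom f x) ↔ f x ≠ f ⊤ := by
  obtain ⟨ℓ, X, hX, rfl, hmax⟩ := exists_chain_altFrom f x
  have hend : f (X (Fin.last ℓ)) = f ⊤ := by
    by_contra hne
    have hlt : X (Fin.last ℓ) < ⊤ := lt_top_iff_ne_top.2 fun h ↦ hne (h ▸ rfl)
    have hstart : (Fin.snoc X ⊤ : Fin (ℓ + 2) → (Fin n → Bool)) 0 = X 0 :=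
      Fin.snoc_castSucc (i := 0) ..
    have := altCount_le_altFrom f (strictMono_snoc hX hlt)
    rw [altCount_snoc, if_pos hne, hmax, hstart] at this
    omega
  rw [← hmax, odd_altCount_iff, hend]

lemma alt_eq_altFrom_bot : alt f = altFrom f ⊥ := by
  refine le_antisymm ?_ (altFrom_le_alt f ⊥)
  obtain ⟨ℓ, X, hX, hmax⟩ := exists_chain_alt f
  rw [← hmax]
  rcases (bot_le : ⊥ ≤ X 0).eq_or_lt with h | h
  · exact h ▸ altCount_le_altFrom f hX
  · have hcons : StrictMono (Fin.cons ⊥ X : Fin (ℓ + 2) → (Fin n → Bool)) :=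
      Fin.strictMono_cons.2 ⟨fun j ↦ h.trans_le (hX.monotone (Fin.zero_le j)), hX⟩
    have := altCount_le_altFrom f hcons
    rw [altCount_cons, Fin.cons_zero] at this
    omega

lemma odd_alt_iff : Odd (alt f) ↔ f ⊥ ≠ f ⊤ :=
  alt_eq_altFrom_bot f ▸ odd_altFrom_iff f ⊥

end

/-- Extension of Markov's theorem (Blais–Canonne–Oliveira–Servedio–Tan, Theorem 1):
with `k = a(f)`, for every `x`,
`f(x) = f(0^n) ⊕ ⨁_{ℓ=0}^{k-1} 1[a_f(x) ≤ ℓ]`, i.e. `f(x)` equals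
`PAR_k(1[T_0^f](x), …, 1[T_{k-1}^f](x))` if `f(0^n) = 0`, and its negation if
`f(0^n) = 1`.  The parity of the `k` indicator bits is expressed as the parity of the
number of `ℓ ∈ {0, …, k-1}` with `a_f(x) ≤ ℓ`. -/
theorem stmt0 {n : ℕ} (f : (Fin n → Bool) → Bool) (k : ℕ) (hk : k = alt f)
    (x : Fin n → Bool) :
    f x = xor (f (fun _ => false))
      (decide (Odd ((Finset.range k).filter (fun ℓ => altFrom f x ≤ ℓ)).card)) := by
  subst hk
  simp only [card_filter_range_le, Nat.odd_sub (altFrom_le_alt f x), odd_alt_iff,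
    ← Nat.not_odd_iff_even, odd_altFrom_iff]
  change f x = xor (f ⊥) _
  cases f x <;> cases f ⊥ <;> cases f ⊤ <;> decide
end

section
/- For every α ∈ (0,1] there exist a constant c > 0 and N ∈ ℕ such that for all n ≥ N and all f: {0,1}^n → {0,1} with total influence Inf[f] ≥ αn, the alternation complexity satisfies a(f) ≥ c·√n. -/
/-- `Inf_i[f] = Pr_x[f(x) ≠ f(x^{⊕ i})]`, the influence of coordinate `i` on `f`. -/
noncomputable def influence {n : ℕ} (i : Fin n) (f : (Fin n → Bool) → Bool) : ℝ :=
  ((Finset.univ.filter (fun x : Fin n → Bool =>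
      f x ≠ f (Function.update x i (!(x i))))).card : ℝ) / 2 ^ n

/-- `Inf[f] = ∑ i, Inf_i[f]`, the total influence of `f`. -/
noncomputable def totalInfluence {n : ℕ} (f : (Fin n → Bool) → Bool) : ℝ :=
  ∑ i : Fin n, influence i f

/-!
Average over the `n!` maximal chains `∅ = x⁰ < x¹ < ⋯ < xⁿ = [n]`, the chain of a
permutation `σ` adding the coordinates `σ 0, σ 1, …` one at a time: each has at most `a(f)`
alternations. An upward edge from `x` to `x + eᵢ` with `|x| = k` lies on `k! (n-1-k)!` of these
chains, which is at least `(n-1)! / B` for the middle binomial coefficient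
`B = C(n-1, ⌊(n-1)/2⌋)`. As there are `Inf[f] 2ⁿ / 2` sensitive upward edges,
`Inf[f] 2ⁿ ≤ 2 n B a(f)`, and `B = O(2ⁿ / √n)` gives `a(f) ≥ α √n / 4`.
-/

open Finset Function Equiv
open scoped Nat

theorem Ordering.univ_eq : (univ : Finset Ordering) = {.lt, .eq, .gt} := by decide

section PermFibers

variable {α ι : Type*} [Fintype α] [DecidableEq ι]

theorem Fintype.sum_card_fiber [Fintype ι] (f : α → ι) :
    ∑ i, Fintype.card {a // f a = i} = Fintype.card α := by
  rw [← Fintype.card_sigma, Fintype.card_congr (sigmaFiberEquiv f)]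

theorem Fintype.exists_perm_comp_eq {f g : α → ι}
    (h : ∀ i, Fintype.card {a // f a = i} = Fintype.card {a // g a = i}) :
    ∃ σ : Perm α, f ∘ σ = g :=
  ⟨(sigmaFiberEquiv g).symm.trans
      ((sigmaCongrRight fun i => Fintype.equivOfCardEq (h i).symm).trans (sigmaFiberEquiv f)),
    funext fun a => (Fintype.equivOfCardEq (h (g a)).symm ⟨a, rfl⟩).2⟩

theorem Fintype.card_perm_comp_eq [DecidableEq α] [Fintype ι] {f g : α → ι}
    (h : ∀ i, Fintype.card {a // f a = i} = Fintype.card {a // g a = i}) :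
    Fintype.card {σ : Perm α // f ∘ σ = g} = ∏ i, (Fintype.card {a // f a = i})! := by
  obtain ⟨σ₀, rfl⟩ := Fintype.exists_perm_comp_eq h
  rw [← DomMulAct.stabilizer_card f]
  refine Fintype.card_congr (subtypeEquiv (Equiv.mulRight σ₀⁻¹) fun σ => ?_)
  constructor <;> intro hσ <;> ext a
  · simpa using congrFun hσ (σ₀⁻¹ a)
  · simpa using congrFun hσ (σ₀ a)

end PermFibers

theorem Nat.succ_mul_centralBinom_sq_le (m : ℕ) : (m + 1) * m.centralBinom ^ 2 ≤ 16 ^ m := by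
  induction m with
  | zero => simp
  | succ m ih =>
    refine Nat.le_of_mul_le_mul_left ?_ (show 0 < (m + 1) ^ 2 by positivity)
    have hcoeff : (m + 2) * (2 * (2 * m + 1)) ^ 2 ≤ 16 * (m + 1) ^ 2 * (m + 1) := by nlinarith
    calc (m + 1) ^ 2 * ((m + 1 + 1) * (m + 1).centralBinom ^ 2)
        = (m + 2) * ((m + 1) * (m + 1).centralBinom) ^ 2 := by ring
      _ = (m + 2) * (2 * (2 * m + 1)) ^ 2 * m.centralBinom ^ 2 := by
        rw [Nat.succ_mul_centralBinom_succ]; ring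
      _ ≤ 16 * (m + 1) ^ 2 * ((m + 1) * m.centralBinom ^ 2) := by
        rw [← mul_assoc]; gcongr
      _ ≤ 16 * (m + 1) ^ 2 * 16 ^ m := by gcongr
      _ = (m + 1) ^ 2 * 16 ^ (m + 1) := by ring

theorem Nat.mul_choose_pred_sq_le (n k : ℕ) : n * (n - 1).choose k ^ 2 ≤ 2 * 4 ^ n := by
  have hchoose : (n - 1).choose k ≤ (n / 2).centralBinom :=
    (Nat.choose_le_choose k (by omega)).trans (Nat.choose_le_centralBinom k (n / 2))
  have hpow : 16 ^ (n / 2) ≤ 4 ^ n := by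
    rw [show 16 = 4 ^ 2 by rfl, ← pow_mul]; exact Nat.pow_le_pow_right (by norm_num) (by omega)
  calc n * (n - 1).choose k ^ 2 ≤ 2 * ((n / 2 + 1) * (n / 2).centralBinom ^ 2) := by
        rw [← mul_assoc]; gcongr; omega
    _ ≤ 2 * 4 ^ n := by gcongr; exact (Nat.succ_mul_centralBinom_sq_le _).trans hpow

theorem Nat.cast_choose_pred_mul_sqrt_le (n k : ℕ) :
    ((n - 1).choose k : ℝ) * √n ≤ 2 * 2 ^ n := by
  have h : (n : ℝ) * (n - 1).choose k ^ 2 ≤ 2 * 4 ^ n := by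
    exact_mod_cast Nat.mul_choose_pred_sq_le n k
  refine (pow_le_pow_iff_left₀ (by positivity) (by positivity) two_ne_zero).1 ?_
  rw [mul_pow, Real.sq_sqrt n.cast_nonneg, mul_pow, ← pow_mul, pow_mul']
  norm_num
  linarith [pow_nonneg (show (0 : ℝ) ≤ 4 by norm_num) n]

section BooleanCube

variable {n : ℕ}

theorem altCount_le_alt (f : (Fin n → Bool) → Bool) {ℓ : ℕ}
    {X : Fin (ℓ + 1) → (Fin n → Bool)} (hX : StrictMono X) : altCount f X ≤ alt f := by
  refine le_csSup ⟨Fintype.card (Fin n → Bool), ?_⟩ ⟨ℓ, X, hX, rfl⟩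
  rintro _ ⟨ℓ', Y, hY, rfl⟩
  calc altCount f Y ≤ ℓ' := (card_filter_le _ _).trans_eq (card_fin ℓ')
    _ ≤ Fintype.card (Fin (ℓ' + 1)) := by simp
    _ ≤ _ := Fintype.card_le_of_injective Y hY.injective

def permChain (σ : Perm (Fin n)) (j : Fin (n + 1)) : Fin n → Bool :=
  fun a => decide ((σ.symm a : ℕ) < j)

theorem permChain_castSucc_apply_self (σ : Perm (Fin n)) (j : Fin n) :
    permChain σ j.castSucc (σ j) = false := by
  simp [permChain]

theorem permChain_succ (σ : Perm (Fin n)) (j : Fin n) :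
    permChain σ j.succ = update (permChain σ j.castSucc) (σ j) true := by
  ext a
  rcases eq_or_ne a (σ j) with rfl | ha
  · simp [permChain]
  · have : (σ.symm a : ℕ) ≠ j := Fin.val_ne_of_ne (by rwa [Ne, symm_apply_eq])
    simp only [permChain, update_of_ne ha, Fin.val_succ, Fin.val_castSucc, decide_eq_decide]
    omega

theorem permChain_strictMono (σ : Perm (Fin n)) : StrictMono (permChain σ) :=
  Fin.strictMono_iff_lt_succ.2 fun j => by
    rw [permChain_succ, lt_update_self_iff, permChain_castSucc_apply_self]
    exact Bool.false_lt_true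

section Edges

variable (f : (Fin n → Bool) → Bool)

def upEdges : Finset ((Fin n → Bool) × Fin n) :=
  {p | p.1 p.2 = false ∧ f p.1 ≠ f (update p.1 p.2 true)}

def chainEdge (q : Perm (Fin n) × Fin n) : (Fin n → Bool) × Fin n :=
  (permChain q.1 q.2.castSucc, q.1 q.2)

theorem sum_altCount_permChain :
    ∑ σ, altCount f (permChain σ) = #{q | chainEdge q ∈ upEdges f} := by
  rw [card_filter, Fintype.sum_prod_type]
  refine sum_congr rfl fun σ _ => ?_
  simp [altCount, card_filter, upEdges, chainEdge, permChain_succ, permChain_castSucc_apply_self]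

/-- `edgeLabel x i ∘ σ = compare · k` says that `σ` lists the `k` coordinates set in `x` first
and `i` next, i.e. that the chain of `σ` passes from `x` to `update x i true` at step `k`. -/
def edgeLabel (x : Fin n → Bool) (i a : Fin n) : Ordering :=
  if a = i then .eq else if x a then .lt else .gt

theorem chainEdge_eq_of_edgeLabel_comp {x : Fin n → Bool} {i : Fin n} (hxi : x i = false)
    {σ : Perm (Fin n)} {k : ℕ} (hk : k < n)
    (hσ : edgeLabel x i ∘ σ = fun t : Fin n => compare (t : ℕ) k) :
    chainEdge (σ, ⟨k, hk⟩) = (x, i) := by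
  have hlabel (a : Fin n) : compare (σ.symm a : ℕ) k = edgeLabel x i a := by
    simpa using (congrFun hσ (σ.symm a)).symm
  have hi : σ.symm i = ⟨k, hk⟩ :=
    Fin.ext (compare_eq_iff_eq.1 ((hlabel i).trans (by simp [edgeLabel])))
  refine Prod.ext (funext fun a => ?_) ((symm_apply_eq σ).1 hi).symm
  have ha := hlabel a
  simp only [chainEdge, permChain, Fin.val_castSucc]
  unfold edgeLabel at ha
  split_ifs at ha with hai hxa
  · simp [hai, hi, hxi]
  · simp [compare_lt_iff_lt.1 ha, hxa]
  · simp [(compare_gt_iff_gt.1 ha).not_gt, hxa]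

theorem card_edgeLabel_eq_eq (x : Fin n → Bool) (i : Fin n) :
    Fintype.card {a // edgeLabel x i a = .eq} = 1 := by
  have (a : Fin n) : edgeLabel x i a = .eq ↔ a = i := by
    unfold edgeLabel; split_ifs <;> simp_all
  rw [Fintype.card_congr (subtypeEquivRight this), Fintype.card_subtype_eq]

theorem Fin.card_compare_val_eq_lt {k : ℕ} (hk : k ≤ n) :
    Fintype.card {t : Fin n // compare (t : ℕ) k = .lt} = k := by
  simp [compare_lt_iff_lt, Fintype.card_subtype, Fin.card_filter_val_lt, hk]

theorem Fin.card_compare_val_eq_eq {k : ℕ} (hk : k < n) :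
    Fintype.card {t : Fin n // compare (t : ℕ) k = .eq} = 1 := by
  have (t : Fin n) : compare (t : ℕ) k = .eq ↔ t = ⟨k, hk⟩ :=
    compare_eq_iff_eq.trans (Fin.ext_iff (b := ⟨k, hk⟩)).symm
  rw [Fintype.card_congr (subtypeEquivRight this), Fintype.card_subtype_eq]

theorem exists_factorial_mul_factorial_le_card_fiber {x : Fin n → Bool} {i : Fin n}
    (hxi : x i = false) : ∃ k m, k + m + 1 = n ∧ k ! * m ! ≤ #{q | chainEdge q = (x, i)} := by
  set k := Fintype.card {a // edgeLabel x i a = .lt}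
  set m := Fintype.card {a // edgeLabel x i a = .gt}
  have hsum : k + 1 + m = n := by
    have := Fintype.sum_card_fiber (edgeLabel x i)
    simp [Ordering.univ_eq, card_edgeLabel_eq_eq] at this
    omega
  have hk : k < n := by omega
  set level : Fin n → Ordering := fun t => compare (t : ℕ) k
  have hfib (o : Ordering) :
      Fintype.card {a // edgeLabel x i a = o} = Fintype.card {t // level t = o} := by
    -- the `.gt` fibres agree because both families of fibre sizes sum to `n`
    have hlevel := Fintype.sum_card_fiber level
    simp [Ordering.univ_eq] at hlevel
    have hlt : Fintype.card {t // level t = .lt} = k := Fin.card_compare_val_eq_lt hk.le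
    have heq : Fintype.card {t // level t = .eq} = 1 := Fin.card_compare_val_eq_eq hk
    have := card_edgeLabel_eq_eq x i
    cases o <;> omega
  refine ⟨k, m, by omega, ?_⟩
  calc k ! * m ! = Fintype.card {σ : Perm (Fin n) // edgeLabel x i ∘ σ = level} := by
        rw [Fintype.card_perm_comp_eq hfib]; simp [Ordering.univ_eq, card_edgeLabel_eq_eq]; ring
    _ ≤ #{q | chainEdge q = (x, i)} := by
        rw [Fintype.card_subtype]
        refine card_le_card_of_injOn (fun σ => (σ, ⟨k, hk⟩)) (fun σ hσ => ?_)
          (fun _ _ _ _ h => (Prod.ext_iff.1 h).1)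
        simp only [coe_filter, mem_univ, true_and, Set.mem_ofPred_eq] at hσ ⊢
        exact chainEdge_eq_of_edgeLabel_comp hxi hk hσ

theorem factorial_pred_le_choose_mul_card_fiber {x : Fin n → Bool} {i : Fin n}
    (hxi : x i = false) :
    (n - 1)! ≤ (n - 1).choose ((n - 1) / 2) * #{q | chainEdge q = (x, i)} := by
  obtain ⟨k, m, rfl, h⟩ := exists_factorial_mul_factorial_le_card_fiber hxi
  rw [Nat.add_sub_cancel]
  calc (k + m)! = (k + m).choose m * k ! * m ! :=
        (Nat.add_choose_mul_factorial_mul_factorial k m).symm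
    _ ≤ (k + m).choose ((k + m) / 2) * (k ! * m !) := by
        rw [mul_assoc]; gcongr; exact Nat.choose_le_middle _ _
    _ ≤ _ := by gcongr

theorem card_upEdges_mul_factorial_le :
    #(upEdges f) * (n - 1)! ≤ (n - 1).choose ((n - 1) / 2) * n ! * alt f := by
  set B := (n - 1).choose ((n - 1) / 2)
  calc #(upEdges f) * (n - 1)! = ∑ p ∈ upEdges f, (n - 1)! := by rw [sum_const, smul_eq_mul]
    _ ≤ ∑ p ∈ upEdges f, B * #{q | chainEdge q = p} :=
        sum_le_sum fun p hp => factorial_pred_le_choose_mul_card_fiber (mem_filter.1 hp).2.1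
    _ = B * #{q | chainEdge q ∈ upEdges f} := by
        rw [← mul_sum, sum_card_fiberwise_eq_card_filter]
    _ = B * ∑ σ, altCount f (permChain σ) := by rw [sum_altCount_permChain]
    _ ≤ B * ∑ _σ : Perm (Fin n), alt f := by
        gcongr with σ; exact altCount_le_alt f (permChain_strictMono σ)
    _ = B * n ! * alt f := by simp [Fintype.card_perm]; ring

theorem card_upEdges_le : #(upEdges f) ≤ n * (n - 1).choose ((n - 1) / 2) * alt f := by
  rcases n with _ | n
  · simp [upEdges]
  · refine Nat.le_of_mul_le_mul_right ?_ (Nat.factorial_pos n)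
    calc #(upEdges f) * n ! ≤ n.choose (n / 2) * (n + 1)! * alt f :=
          card_upEdges_mul_factorial_le f
      _ = (n + 1) * n.choose (n / 2) * alt f * n ! := by rw [Nat.factorial_succ]; ring

theorem card_upEdges_eq_sum :
    #(upEdges f) = ∑ i, #{x | x i = false ∧ f x ≠ f (update x i true)} := by
  simp only [upEdges, card_filter, Fintype.sum_prod_type]
  exact sum_comm

theorem card_sensitive_eq_two_mul (i : Fin n) :
    #{x | f x ≠ f (update x i (!x i))} =
      2 * #{x | x i = false ∧ f x ≠ f (update x i true)} := by
  rw [← card_filter_add_card_filter_not (p := fun x => x i = false), filter_filter, two_mul]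
  congr 1
  · refine congrArg card (filter_congr fun x _ => ?_)
    cases x i <;> simp [and_comm]
  · refine card_nbij' (fun x => update x i (!x i)) (fun x => update x i (!x i)) ?_ ?_ ?_ ?_
    all_goals intro x hx
    all_goals simp only [coe_filter, mem_univ, true_and, Set.mem_ofPred_eq] at hx ⊢
    · obtain ⟨hne, hxi⟩ := hx
      rw [Bool.not_eq_false] at hxi
      simp only [mem_filter, mem_univ, true_and, hxi, Bool.not_true] at hne
      have hx : update x i true = x := hxi ▸ update_eq_self i x
      simp [hxi, hx, Ne.symm hne]
    · obtain ⟨hxi, hne⟩ := hx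
      have hx : update x i false = x := hxi ▸ update_eq_self i x
      simp [hxi, hx, Ne.symm hne]
    · simp
    · simp

theorem totalInfluence_mul_two_pow : totalInfluence f * 2 ^ n = 2 * #(upEdges f) := by
  rw [totalInfluence, card_upEdges_eq_sum]
  simp only [influence, ← sum_div, card_sensitive_eq_two_mul]
  rw [div_mul_cancel₀ _ (by positivity)]
  push_cast
  rw [mul_sum]

theorem totalInfluence_mul_two_pow_le :
    totalInfluence f * 2 ^ n ≤ 2 * n * (n - 1).choose ((n - 1) / 2) * alt f := by
  rw [totalInfluence_mul_two_pow, mul_assoc 2, mul_assoc 2]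
  exact_mod_cast Nat.mul_le_mul_left 2 (card_upEdges_le f)

end Edges

end BooleanCube

theorem stmt5_general (α : ℝ) (hα0 : 0 < α) :
    ∃ (c : ℝ) (N : ℕ), 0 < c ∧ ∀ n : ℕ, N ≤ n → ∀ f : (Fin n → Bool) → Bool,
      α * n ≤ totalInfluence f → c * Real.sqrt n ≤ (alt f : ℝ) := by
  refine ⟨α / 4, 0, by positivity, fun n _ f hf => ?_⟩
  rcases n.eq_zero_or_pos with rfl | hn
  · simp
  set B := (n - 1).choose ((n - 1) / 2)
  have hedges : α * 2 ^ n ≤ 2 * B * alt f := by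
    refine le_of_mul_le_mul_left ?_ (show (0 : ℝ) < n by positivity)
    calc n * (α * 2 ^ n) = α * n * 2 ^ n := by ring
      _ ≤ totalInfluence f * 2 ^ n := by gcongr
      _ ≤ 2 * n * B * alt f := totalInfluence_mul_two_pow_le f
      _ = n * (2 * B * alt f) := by ring
  have hscaled : α * √n * 2 ^ n ≤ 4 * alt f * 2 ^ n := by
    calc α * √n * 2 ^ n = α * 2 ^ n * √n := by ring
      _ ≤ 2 * B * alt f * √n := by gcongr
      _ = 2 * alt f * (B * √n) := by ring
      _ ≤ 2 * alt f * (2 * 2 ^ n) :=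
        mul_le_mul_of_nonneg_left (Nat.cast_choose_pred_mul_sqrt_le n _) (by positivity)
      _ = 4 * alt f * 2 ^ n := by ring
  linarith [le_of_mul_le_mul_right hscaled (by positivity)]

/-- For every `α ∈ (0,1]` there are `c > 0` and `N` such that for all `n ≥ N`,
every `f : {0,1}^n → {0,1}` with `Inf[f] ≥ α n` has `a(f) ≥ c √n`. -/
theorem stmt5 (α : ℝ) (hα0 : 0 < α) (hα1 : α ≤ 1) :
    ∃ (c : ℝ) (N : ℕ), 0 < c ∧ ∀ n : ℕ, N ≤ n → ∀ f : (Fin n → Bool) → Bool,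
      α * n ≤ totalInfluence f → c * Real.sqrt n ≤ (alt f : ℝ) :=
  stmt5_general α hα0
end

section
/- For every n ≥ 1, every integer t ≥ 0, and every f: {0,1}^n → {0,1}, define f': {0,1}^n → {0,1} by f'(x) = f(x) if the Hamming weight |x| satisfies n/2 − t ≤ |x| ≤ n/2 + t, and f'(x) = 0 otherwise. Then a(f') ≤ 2t + 2, and f' is ε-close to f for ε = 2e^{−2t²/n}. -/
/-- Hamming weight of a point of the Boolean cube. -/
def wt {n : ℕ} (x : Fin n → Bool) : ℕ :=
  (Finset.univ.filter (fun i => x i = true)).card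

lemma aux_wt_lt_wt {n : ℕ} {x y : Fin n → Bool} (h : x < y) : wt x < wt y := by
  apply Finset.card_lt_card
  constructor
  · intro i hi
    simp only [Finset.mem_filter, Finset.mem_univ, true_and] at hi ⊢
    have := h.le i
    rw [hi] at this
    exact le_antisymm (by simp) this
  · intro hsub
    obtain ⟨i, hi⟩ : ∃ i, ¬ (y i ≤ x i) := by
      by_contra hc
      push_neg at hc
      exact absurd (le_antisymm h.le hc) h.ne
    have : y i = true ∧ x i = false := by
      revert hi; cases y i <;> cases x i <;> simp
    have hmem := hsub (by simp [this.1] : i ∈ Finset.univ.filter (fun i => y i = true))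
    simp [this.2] at hmem

lemma aux_wt_le {n : ℕ} (x : Fin n → Bool) : wt x ≤ n := by
  simpa [wt] using Finset.card_filter_le Finset.univ (fun i => x i = true)

lemma aux_wt_not {n : ℕ} (x : Fin n → Bool) : wt (fun i => ! x i) = n - wt x := by
  unfold wt
  have : (Finset.univ.filter (fun i => (! x i) = true)) =
      (Finset.univ.filter (fun i => x i = true))ᶜ := by
    ext i; simp
  rw [this, Finset.card_compl]
  simp

lemma aux_chain_growth {n ℓ : ℕ} {X : Fin (ℓ + 1) → (Fin n → Bool)} (hX : StrictMono X) :
    ∀ (d : ℕ) (i j : Fin (ℓ + 1)), (j : ℕ) = (i : ℕ) + d → wt (X i) + d ≤ wt (X j) := by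
  intro d
  induction d with
  | zero => intro i j hij; have : i = j := Fin.ext (by omega); simp [this]
  | succ d ih =>
    intro i j hij
    have him : (i : ℕ) + d < ℓ + 1 := by omega
    set m : Fin (ℓ + 1) := ⟨(i : ℕ) + d, him⟩ with hm
    have h1 := ih i m rfl
    have h2 : m < j := by
      rw [Fin.lt_def]; simp [hm]; omega
    have := aux_wt_lt_wt (hX h2)
    omega

lemma aux_altCount_le {n : ℕ} (t : ℕ) (f' : (Fin n → Bool) → Bool)
    (hwin : ∀ x, f' x = true → (n : ℝ) / 2 - t ≤ (wt x : ℝ) ∧ (wt x : ℝ) ≤ (n : ℝ) / 2 + t)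
    {ℓ : ℕ} (X : Fin (ℓ + 1) → (Fin n → Bool)) (hX : StrictMono X) :
    altCount f' X ≤ 2 * t + 2 := by
  classical
  set S : Finset (Fin ℓ) :=
    Finset.univ.filter (fun j : Fin ℓ => f' (X j.castSucc) ≠ f' (X j.succ)) with hS
  have witness : ∀ j ∈ S, ∃ i : Fin (ℓ + 1),
      (j : ℕ) ≤ (i : ℕ) ∧ (i : ℕ) ≤ (j : ℕ) + 1 ∧ f' (X i) = true := by
    intro j hj
    rw [hS, Finset.mem_filter] at hj
    rcases Bool.eq_false_or_eq_true (f' (X j.castSucc)) with h | h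
    · exact ⟨j.castSucc, by simp, by simp, h⟩
    · refine ⟨j.succ, by simp, by simp, ?_⟩
      rcases Bool.eq_false_or_eq_true (f' (X j.succ)) with h2 | h2
      · exact h2
      · exact absurd (h.trans h2.symm) hj.2
  rcases S.eq_empty_or_nonempty with hSe | hSne
  · rw [altCount, ← hS, hSe]; simp
  · set j₀ := S.min' hSne with hj₀
    have hub : ∀ j ∈ S, (j : ℕ) ≤ (j₀ : ℕ) + (2 * t + 1) := by
      intro j hj
      by_contra hc
      push_neg at hc
      obtain ⟨i₀, hi₀l, hi₀r, hf₀⟩ := witness j₀ (S.min'_mem hSne)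
      obtain ⟨i, hil, hir, hfi⟩ := witness j hj
      have hle : (i₀ : ℕ) + (2 * t + 1) ≤ (i : ℕ) := by omega
      have hg := aux_chain_growth hX ((i : ℕ) - (i₀ : ℕ)) i₀ i (by omega)
      have hw₀ := hwin _ hf₀
      have hwi := hwin _ hfi
      have hlt : (wt (X i₀) : ℝ) + (2 * t + 1) ≤ (wt (X i) : ℝ) := by
        have : wt (X i₀) + (2 * t + 1) ≤ wt (X i) := by omega
        exact_mod_cast this
      linarith [hw₀.1, hwi.2]
    calc altCount f' X = S.card := rfl
      _ = (S.image (Fin.val)).card := (Finset.card_image_of_injective S Fin.val_injective).symm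
      _ ≤ (Finset.Icc (j₀ : ℕ) ((j₀ : ℕ) + (2 * t + 1))).card := by
          apply Finset.card_le_card
          intro k hk
          simp only [Finset.mem_image] at hk
          obtain ⟨j, hj, rfl⟩ := hk
          rw [Finset.mem_Icc]
          exact ⟨S.min'_le j hj, hub j hj⟩
      _ = 2 * t + 2 := by rw [Nat.card_Icc]; omega

lemma aux_cube_mgf (n : ℕ) (l : ℝ) :
    ∑ x : Fin n → Bool, Real.exp (l * (wt x : ℝ)) = (1 + Real.exp l) ^ n := by
  classical
  have h1 : ∀ x : Fin n → Bool,
      Real.exp (l * (wt x : ℝ)) = ∏ i, (if x i = true then Real.exp l else 1) := by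
    intro x
    rw [wt, Finset.card_filter]
    push_cast
    rw [Finset.mul_sum, Real.exp_sum]
    apply Finset.prod_congr rfl
    intro i _
    by_cases h : x i = true <;> simp [h]
  simp only [h1]
  have key := Finset.prod_univ_sum (fun _ : Fin n => (Finset.univ : Finset Bool))
    (fun _ b => if b = true then Real.exp l else 1)
  rw [Fintype.piFinset_univ] at key
  rw [← key]
  simp [Fintype.sum_bool, Finset.prod_const, add_comm]

lemma aux_upper_tail (n t : ℕ) (hn : 1 ≤ n) :
    ((Finset.univ.filter (fun x : Fin n → Bool => (n : ℝ) / 2 + t < (wt x : ℝ))).card : ℝ)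
      ≤ 2 ^ n * Real.exp (-2 * (t : ℝ) ^ 2 / n) := by
  classical
  have hn' : (0 : ℝ) < n := by exact_mod_cast hn
  set l : ℝ := 4 * t / n with hl_def
  have hl : 0 ≤ l := by positivity
  set U := Finset.univ.filter (fun x : Fin n → Bool => (n : ℝ) / 2 + t < (wt x : ℝ)) with hU
  have key : (U.card : ℝ) ≤ Real.exp (-(l * ((n : ℝ) / 2 + t))) * (1 + Real.exp l) ^ n := by
    have h2 : (U.card : ℝ) ≤ ∑ x ∈ U, Real.exp (l * (wt x : ℝ) - l * ((n : ℝ) / 2 + t)) := by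
      rw [Finset.card_eq_sum_ones]
      push_cast
      apply Finset.sum_le_sum
      intro x hx
      rw [hU, Finset.mem_filter] at hx
      apply Real.one_le_exp
      have := hx.2
      nlinarith [hl]
    have h3 : ∑ x ∈ U, Real.exp (l * (wt x : ℝ) - l * ((n : ℝ) / 2 + t))
        ≤ ∑ x : Fin n → Bool, Real.exp (l * (wt x : ℝ) - l * ((n : ℝ) / 2 + t)) := by
      apply Finset.sum_le_sum_of_subset_of_nonneg (Finset.filter_subset _ _)
      intro x _ _
      positivity
    have h4 : ∑ x : Fin n → Bool, Real.exp (l * (wt x : ℝ) - l * ((n : ℝ) / 2 + t))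
        = Real.exp (-(l * ((n : ℝ) / 2 + t))) * (1 + Real.exp l) ^ n := by
      rw [← aux_cube_mgf n l, Finset.mul_sum]
      apply Finset.sum_congr rfl
      intro x _
      rw [← Real.exp_add]
      ring_nf
    linarith
  have hcosh : (1 + Real.exp l) ≤ 2 * Real.exp (l / 2 + (l / 2) ^ 2 / 2) := by
    have h := Real.cosh_le_exp_half_sq (l / 2)
    have heq : 1 + Real.exp l = 2 * Real.exp (l / 2) * Real.cosh (l / 2) := by
      rw [Real.cosh_eq]
      have e3 : Real.exp l = Real.exp (l / 2) * Real.exp (l / 2) := by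
        rw [← Real.exp_add]; ring_nf
      rw [Real.exp_neg]
      have hpos := Real.exp_pos (l / 2)
      field_simp
      nlinarith [e3]
    rw [heq, Real.exp_add, ← mul_assoc]
    have hp : (0 : ℝ) ≤ 2 * Real.exp (l / 2) := by positivity
    exact mul_le_mul_of_nonneg_left h hp
  have hpow : (1 + Real.exp l) ^ n ≤ 2 ^ n * Real.exp ((n : ℝ) * (l / 2 + (l / 2) ^ 2 / 2)) := by
    calc (1 + Real.exp l) ^ n ≤ (2 * Real.exp (l / 2 + (l / 2) ^ 2 / 2)) ^ n := by
          apply pow_le_pow_left₀ (by positivity) hcosh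
      _ = 2 ^ n * Real.exp ((n : ℝ) * (l / 2 + (l / 2) ^ 2 / 2)) := by
          rw [mul_pow, ← Real.exp_nat_mul]
  have hfinal : Real.exp (-(l * ((n : ℝ) / 2 + t))) * (2 ^ n * Real.exp ((n : ℝ) * (l / 2 + (l / 2) ^ 2 / 2)))
      = 2 ^ n * Real.exp (-2 * (t : ℝ) ^ 2 / n) := by
    rw [mul_comm (Real.exp _), mul_assoc, ← Real.exp_add]
    congr 1
    rw [hl_def]
    field_simp
    ring
  calc (U.card : ℝ) ≤ Real.exp (-(l * ((n : ℝ) / 2 + t))) * (1 + Real.exp l) ^ n := key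
    _ ≤ Real.exp (-(l * ((n : ℝ) / 2 + t))) * (2 ^ n * Real.exp ((n : ℝ) * (l / 2 + (l / 2) ^ 2 / 2))) := by
        apply mul_le_mul_of_nonneg_left hpow (le_of_lt (Real.exp_pos _))
    _ = 2 ^ n * Real.exp (-2 * (t : ℝ) ^ 2 / n) := hfinal

lemma aux_lower_tail (n t : ℕ) (hn : 1 ≤ n) :
    ((Finset.univ.filter (fun x : Fin n → Bool => (wt x : ℝ) < (n : ℝ) / 2 - t)).card : ℝ)
      ≤ 2 ^ n * Real.exp (-2 * (t : ℝ) ^ 2 / n) := by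
  classical
  set L := Finset.univ.filter (fun x : Fin n → Bool => (wt x : ℝ) < (n : ℝ) / 2 - t) with hL
  set U := Finset.univ.filter (fun x : Fin n → Bool => (n : ℝ) / 2 + t < (wt x : ℝ)) with hU
  have hinj : Function.Injective (fun (x : Fin n → Bool) => (fun i => ! x i)) := by
    intro a b h
    funext i
    have := congrFun h i
    simpa using this
  have hcard : L.card ≤ U.card := by
    rw [← Finset.card_image_of_injective L hinj]
    apply Finset.card_le_card
    intro y hy
    simp only [Finset.mem_image] at hy
    obtain ⟨x, hx, rfl⟩ := hy
    rw [hL, Finset.mem_filter] at hx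
    rw [hU, Finset.mem_filter]
    refine ⟨Finset.mem_univ _, ?_⟩
    rw [aux_wt_not]
    have h1 : wt x ≤ n := aux_wt_le x
    have h2 : ((n - wt x : ℕ) : ℝ) = (n : ℝ) - (wt x : ℝ) := by
      push_cast [Nat.cast_sub h1]; ring
    rw [h2]
    have := hx.2
    linarith
  calc (L.card : ℝ) ≤ (U.card : ℝ) := by exact_mod_cast hcard
    _ ≤ 2 ^ n * Real.exp (-2 * (t : ℝ) ^ 2 / n) := aux_upper_tail n t hn

/-- Truncating `f` to `0` outside the Hamming-weight window `[n/2 - t, n/2 + t]`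
yields a function `f'` with `a(f') ≤ 2t + 2` which is `ε`-close to `f` for
`ε = 2 e^{-2t²/n}`. -/
theorem stmt6 (n : ℕ) (hn : 1 ≤ n) (t : ℕ) (f f' : (Fin n → Bool) → Bool)
    (hf' : ∀ x, f' x =
      if (n : ℝ) / 2 - t ≤ (wt x : ℝ) ∧ (wt x : ℝ) ≤ (n : ℝ) / 2 + t then f x else false) :
    alt f' ≤ 2 * t + 2 ∧
    ((Finset.univ.filter (fun x : Fin n → Bool => f x ≠ f' x)).card : ℝ) / 2 ^ n
      ≤ 2 * Real.exp (-2 * (t : ℝ) ^ 2 / n) := by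
  classical
  have hwin : ∀ x, f' x = true →
      (n : ℝ) / 2 - t ≤ (wt x : ℝ) ∧ (wt x : ℝ) ≤ (n : ℝ) / 2 + t := by
    intro x hx
    rw [hf'] at hx
    by_cases h : (n : ℝ) / 2 - t ≤ (wt x : ℝ) ∧ (wt x : ℝ) ≤ (n : ℝ) / 2 + t
    · exact h
    · rw [if_neg h] at hx; cases hx
  constructor
  · apply csSup_le'
    rintro k ⟨ℓ, X, hX, rfl⟩
    exact aux_altCount_le t f' hwin X hX
  · set B := Finset.univ.filter (fun x : Fin n → Bool => f x ≠ f' x) with hB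
    set L := Finset.univ.filter (fun x : Fin n → Bool => (wt x : ℝ) < (n : ℝ) / 2 - t) with hL
    set U := Finset.univ.filter (fun x : Fin n → Bool => (n : ℝ) / 2 + t < (wt x : ℝ)) with hU
    have hsub : B ⊆ L ∪ U := by
      intro x hx
      rw [hB, Finset.mem_filter] at hx
      by_cases h : (n : ℝ) / 2 - t ≤ (wt x : ℝ) ∧ (wt x : ℝ) ≤ (n : ℝ) / 2 + t
      · exfalso
        apply hx.2
        rw [hf' x, if_pos h]
      · push_neg at h
        rw [Finset.mem_union, hL, hU, Finset.mem_filter, Finset.mem_filter]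
        by_cases h1 : (n : ℝ) / 2 - t ≤ (wt x : ℝ)
        · exact Or.inr ⟨Finset.mem_univ _, h h1⟩
        · exact Or.inl ⟨Finset.mem_univ _, lt_of_not_ge h1⟩
    have hcard : (B.card : ℝ) ≤ 2 * (2 ^ n * Real.exp (-2 * (t : ℝ) ^ 2 / n)) := by
      have h1 : B.card ≤ L.card + U.card :=
        le_trans (Finset.card_le_card hsub) (Finset.card_union_le L U)
      have h2 : (B.card : ℝ) ≤ (L.card : ℝ) + (U.card : ℝ) := by exact_mod_cast h1
      have h3 := aux_lower_tail n t hn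
      have h4 := aux_upper_tail n t hn
      rw [← hL] at h3
      rw [← hU] at h4
      linarith
    rw [div_le_iff₀ (by positivity : (0 : ℝ) < 2 ^ n)]
    calc (B.card : ℝ) ≤ 2 * (2 ^ n * Real.exp (-2 * (t : ℝ) ^ 2 / n)) := hcard
      _ = 2 * Real.exp (-2 * (t : ℝ) ^ 2 / n) * 2 ^ n := by ring
end

section
/- Every monotone function f: {0,1}^n → {0,1} has total influence Inf[f] ≤ √n. -/
namespace Stmt10Aux

variable {n : ℕ}

/-- The `±1` version of `f`. -/
noncomputable def F (f : (Fin n → Bool) → Bool) (x : Fin n → Bool) : ℝ :=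
  if f x then -1 else 1

/-- The character `χᵢ(x) = (-1)^{xᵢ}`. -/
noncomputable def chi (i : Fin n) (x : Fin n → Bool) : ℝ := if x i then -1 else 1

/-- Flip coordinate `i`. -/
def flp (i : Fin n) (x : Fin n → Bool) : Fin n → Bool := Function.update x i (!(x i))

lemma flp_invol (i : Fin n) : Function.Involutive (flp i) := by
  intro x
  funext j
  by_cases h : j = i
  · subst h; simp [flp]
  · simp [flp, Function.update_of_ne h]

lemma chi_flp_self (i : Fin n) (x : Fin n → Bool) : chi i (flp i x) = - chi i x := by
  simp only [chi, flp, Function.update_self]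
  cases x i <;> simp

lemma chi_flp_ne {i j : Fin n} (h : j ≠ i) (x : Fin n → Bool) :
    chi j (flp i x) = chi j x := by
  simp [chi, flp, Function.update_of_ne h]

lemma sum_flp (i : Fin n) (g : (Fin n → Bool) → ℝ) :
    ∑ x, g (flp i x) = ∑ x, g x :=
  Fintype.sum_bijective (flp i) (flp_invol i).bijective _ _ (fun _ => rfl)

lemma pointwise {f : (Fin n → Bool) → Bool} (hf : Monotone f) (i : Fin n)
    (x : Fin n → Bool) :
    (F f x - F f (flp i x)) * chi i x
      = 2 * (if f x ≠ f (flp i x) then 1 else 0) := by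
  by_cases hxi : x i
  · have hle : flp i x ≤ x := by
      intro j
      by_cases h : j = i
      · subst h; simp [flp, hxi]
      · simp [flp, Function.update_of_ne h]
    have := hf hle
    cases hfx : f x <;> cases hff : f (flp i x) <;>
      simp_all [F, chi, hxi]
    all_goals (try norm_num)
    all_goals exact absurd this (by decide)
  · have hle : x ≤ flp i x := by
      intro j
      by_cases h : j = i
      · subst h; simp [flp, hxi]
      · simp [flp, Function.update_of_ne h]
    have := hf hle
    cases hfx : f x <;> cases hff : f (flp i x) <;>
      simp_all [F, chi, hxi]
    all_goals (try norm_num)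
    all_goals exact absurd this (by decide)

/-- The degree-1 Fourier coefficient `a f i = E[F·χᵢ]`. -/
noncomputable def a (f : (Fin n → Bool) → Bool) (i : Fin n) : ℝ :=
  (∑ x, F f x * chi i x) / 2 ^ n

lemma card_pi : (Fintype.card (Fin n → Bool) : ℝ) = 2 ^ n := by
  simp [Fintype.card_fun]

lemma sum_F_chi {f : (Fin n → Bool) → Bool} (hf : Monotone f) (i : Fin n) :
    ∑ x, F f x * chi i x
      = ((Finset.univ.filter (fun x : Fin n → Bool =>
          f x ≠ f (Function.update x i (!(x i))))).card : ℝ) := by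
  have h1 : ∑ x, F f x * chi i x = ∑ x, -(F f (flp i x) * chi i x) := by
    conv_lhs => rw [← sum_flp i (fun x => F f x * chi i x)]
    refine Finset.sum_congr rfl fun x _ => ?_
    rw [chi_flp_self]; ring
  have h2 : (2:ℝ) * ∑ x, F f x * chi i x
      = ∑ x, (F f x - F f (flp i x)) * chi i x := by
    have h2' : (2:ℝ) * ∑ x, F f x * chi i x
        = (∑ x, F f x * chi i x) + ∑ x, -(F f (flp i x) * chi i x) := by
      rw [← h1]; ring
    rw [h2', ← Finset.sum_add_distrib]
    exact Finset.sum_congr rfl fun x _ => by ring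
  have h3 : ∑ x, (F f x - F f (flp i x)) * chi i x
      = 2 * ∑ x : Fin n → Bool, (if f x ≠ f (flp i x) then (1:ℝ) else 0) := by
    rw [Finset.mul_sum]
    exact Finset.sum_congr rfl fun x _ => pointwise hf i x
  have h4 : ∑ x : Fin n → Bool, (if f x ≠ f (flp i x) then (1:ℝ) else 0)
      = ((Finset.univ.filter (fun x : Fin n → Bool =>
          f x ≠ f (Function.update x i (!(x i))))).card : ℝ) := by
    rw [Finset.sum_boole]
    rfl
  have := h2.trans (h3.trans (by rw [h4]))
  linarith

lemma influence_eq_a {f : (Fin n → Bool) → Bool} (hf : Monotone f) (i : Fin n) :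
    influence i f = a f i := by
  rw [influence, a, sum_F_chi hf]

lemma sum_chi_chi (i j : Fin n) :
    ∑ x, chi i x * chi j x = if i = j then (2:ℝ) ^ n else 0 := by
  by_cases h : i = j
  · subst h
    simp only [if_pos rfl]
    have : ∀ x : Fin n → Bool, chi i x * chi i x = 1 := by
      intro x; simp only [chi]; cases x i <;> simp
    rw [Finset.sum_congr rfl fun x _ => this x]
    simp [card_pi]
  · rw [if_neg h]
    have h1 : ∑ x, chi i x * chi j x = ∑ x, -(chi i x * chi j x) := by
      conv_lhs => rw [← sum_flp i (fun x => chi i x * chi j x)]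
      refine Finset.sum_congr rfl fun x _ => ?_
      rw [chi_flp_self, chi_flp_ne (Ne.symm h)]
      ring
    rw [Finset.sum_neg_distrib] at h1
    linarith

lemma sum_F_chi_eq (f : (Fin n → Bool) → Bool) (i : Fin n) :
    ∑ x, F f x * chi i x = a f i * 2 ^ n := by
  rw [a, div_mul_cancel₀]
  positivity

lemma bessel (f : (Fin n → Bool) → Bool) :
    ∑ i, (a f i) ^ 2 ≤ 1 := by
  set S := ∑ i, (a f i) ^ 2 with hS
  have key : (0:ℝ) ≤ ∑ x, (F f x - ∑ i, a f i * chi i x) ^ 2 :=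
    Finset.sum_nonneg fun x _ => sq_nonneg _
  have e1 : ∑ x, (F f x)^2 = (2:ℝ)^n := by
    have : ∀ x : Fin n → Bool, (F f x)^2 = 1 := by
      intro x; simp only [F]; cases f x <;> simp
    rw [Finset.sum_congr rfl fun x _ => this x]
    simp [card_pi]
  have e2 : ∑ x, F f x * (∑ i, a f i * chi i x) = (2:ℝ)^n * S := by
    have step : ∀ x : Fin n → Bool, F f x * (∑ i, a f i * chi i x)
        = ∑ i, a f i * (F f x * chi i x) := by
      intro x; rw [Finset.mul_sum]; exact Finset.sum_congr rfl fun i _ => by ring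
    rw [Finset.sum_congr rfl fun x _ => step x, Finset.sum_comm]
    rw [hS, Finset.mul_sum]
    refine Finset.sum_congr rfl fun i _ => ?_
    rw [← Finset.mul_sum, sum_F_chi_eq]
    ring
  have e3 : ∑ x, (∑ i, a f i * chi i x)^2 = (2:ℝ)^n * S := by
    have step : ∀ x : Fin n → Bool, (∑ i, a f i * chi i x)^2
        = ∑ i, ∑ j, a f i * a f j * (chi i x * chi j x) := by
      intro x
      rw [sq, Finset.sum_mul_sum]
      exact Finset.sum_congr rfl fun i _ => Finset.sum_congr rfl fun j _ => by ring
    rw [Finset.sum_congr rfl fun x _ => step x, Finset.sum_comm]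
    rw [hS, Finset.mul_sum]
    refine Finset.sum_congr rfl fun i _ => ?_
    rw [Finset.sum_comm]
    have step2 : ∀ j : Fin n, ∑ x, a f i * a f j * (chi i x * chi j x)
        = a f i * a f j * (if i = j then (2:ℝ)^n else 0) := by
      intro j; rw [← Finset.mul_sum, sum_chi_chi]
    rw [Finset.sum_congr rfl fun j _ => step2 j]
    simp only [mul_ite, mul_zero]
    rw [Finset.sum_ite_eq Finset.univ i (fun j => a f i * a f j * (2:ℝ)^n)]
    simp only [Finset.mem_univ, if_pos]
    ring
  have expand : ∑ x, (F f x - ∑ i, a f i * chi i x) ^ 2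
      = (2:ℝ)^n * (1 - S) := by
    have : ∀ x : Fin n → Bool, (F f x - ∑ i, a f i * chi i x) ^ 2
        = (F f x)^2 - 2 * (F f x * (∑ i, a f i * chi i x))
          + (∑ i, a f i * chi i x)^2 := by
      intro x; ring
    rw [Finset.sum_congr rfl fun x _ => this x]
    rw [Finset.sum_add_distrib, Finset.sum_sub_distrib, ← Finset.mul_sum, e1, e2, e3]
    ring
  rw [expand] at key
  have hpow : (0:ℝ) < 2^n := by positivity
  nlinarith

end Stmt10Aux

open Stmt10Aux in
/-- Every monotone `f : {0,1}^n → {0,1}` has total influence `Inf[f] ≤ √n`. -/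
theorem stmt10 {n : ℕ} (f : (Fin n → Bool) → Bool) (hf : Monotone f) :
    totalInfluence f ≤ Real.sqrt n := by
  have h0 : totalInfluence f = ∑ i, a f i := by
    rw [totalInfluence]
    exact Finset.sum_congr rfl fun i _ => influence_eq_a hf i
  have hnn : 0 ≤ totalInfluence f := by
    rw [totalInfluence]
    refine Finset.sum_nonneg fun i _ => ?_
    rw [influence]
    positivity
  have hcs : (∑ i, a f i)^2 ≤ (n : ℝ) * ∑ i, (a f i)^2 := by
    have := sq_sum_le_card_mul_sum_sq (s := (Finset.univ : Finset (Fin n)))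
      (f := a f)
    simpa using this
  have hb : (n : ℝ) * ∑ i, (a f i)^2 ≤ n := by
    have := bessel f
    nlinarith [Nat.cast_nonneg (α := ℝ) n]
  rw [h0]
  rw [show (n : ℝ) = Real.sqrt n ^ 2 by rw [Real.sq_sqrt (Nat.cast_nonneg n)]] at hcs hb
  have : (∑ i, a f i)^2 ≤ Real.sqrt n ^ 2 := le_trans hcs hb
  have hs : 0 ≤ Real.sqrt (n:ℝ) := Real.sqrt_nonneg _
  nlinarith [h0 ▸ hnn]
end
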